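/- arXiv:2305.00509 — 4 statements merged into one kernel-verified Lean document; each statement's English description precedes it below -/
import Mathlib

section
/- For every constant C > 0, the function g(x) := ½·( −[2C−1+x(2C+1)] + √([2C−1+x(2C+1)]² + 8C(x+1)) ) maps the interval (0,∞) bijectively onto the open interval ( 2C/(2C+1), L ), where L = ( −(2C−1) + √((2C−1)² + 8C) )/2. -/
open Set

/-- The function g(x) for a parameter C. -/
noncomputable def gFun (C x : ℝ) : ℝ :=
  (1 / 2) * (-(2 * C - 1 + x * (2 * C + 1)) +
    Real.sqrt ((2 * C - 1 + x * (2 * C + 1)) ^ 2 + 8 * C * (x + 1)))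

/-!
`g x` is the positive root `y` of `y² + (2C - 1 + x(2C + 1)) y = 2C(x + 1)`. This equation is
linear in `x`: it reads `x ((2C + 1) y - 2C) = (1 - y)(y + 2C)`, so `g` has the explicit inverse
`y ↦ (1 - y)(y + 2C) / ((2C + 1) y - 2C)`, and the signs of the two sides force
`2C/(2C + 1) < y < 1` whenever `x > 0`. Finally `L = 1` because `(2C - 1)² + 8C = (2C + 1)²`.
-/

noncomputable def posQuadRoot (b c : ℝ) : ℝ := (-b + Real.sqrt (b ^ 2 + 4 * c)) / 2

lemma posQuadRoot_pos {b c : ℝ} (hc : 0 < c) : 0 < posQuadRoot b c := by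
  have hlt : b ^ 2 < b ^ 2 + 4 * c := by linarith
  have : |b| < Real.sqrt (b ^ 2 + 4 * c) := by
    rw [← Real.sqrt_sq_eq_abs]; exact Real.sqrt_lt_sqrt (sq_nonneg b) hlt
  unfold posQuadRoot; linarith [le_abs_self b]

lemma posQuadRoot_eq_iff {b c y : ℝ} (hc : 0 < c) (hy : 0 < y) :
    posQuadRoot b c = y ↔ y ^ 2 + b * y = c := by
  constructor
  · rintro rfl
    have hs := Real.sq_sqrt (by nlinarith [posQuadRoot_pos (b := b) hc] : 0 ≤ b ^ 2 + 4 * c)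
    unfold posQuadRoot; linear_combination hs / 4
  · intro h
    have hpos : 0 ≤ 2 * y + b := by nlinarith
    have hdisc : b ^ 2 + 4 * c = (2 * y + b) ^ 2 := by linear_combination 4 * h.symm
    rw [posQuadRoot, hdisc, Real.sqrt_sq hpos]; ring

lemma gFun_eq_posQuadRoot (C x : ℝ) :
    gFun C x = posQuadRoot (2 * C - 1 + x * (2 * C + 1)) (2 * C * (x + 1)) := by
  unfold gFun posQuadRoot; ring_nf

lemma gFun_pos {C x : ℝ} (hC : 0 < C) (hx : -1 < x) : 0 < gFun C x := by
  rw [gFun_eq_posQuadRoot]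
  exact posQuadRoot_pos (by nlinarith)

lemma gFun_eq_iff {C x y : ℝ} (hC : 0 < C) (hx : -1 < x) (hy : 0 < y) :
    gFun C x = y ↔ x * ((2 * C + 1) * y - 2 * C) = (1 - y) * (y + 2 * C) := by
  rw [gFun_eq_posQuadRoot, posQuadRoot_eq_iff (by nlinarith) hy]
  constructor <;> intro h <;> linear_combination h

noncomputable def gInv (C y : ℝ) : ℝ := (1 - y) * (y + 2 * C) / ((2 * C + 1) * y - 2 * C)

section Bijection

variable {C : ℝ} (hC : 0 < C)
include hC

lemma two_mul_div_lt_iff {y : ℝ} : 2 * C / (2 * C + 1) < y ↔ 0 < (2 * C + 1) * y - 2 * C := by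
  rw [div_lt_iff₀ (by linarith), sub_pos, mul_comm y]

lemma gFun_mapsTo : MapsTo (gFun C) (Ioi 0) (Ioo (2 * C / (2 * C + 1)) 1) := by
  intro x (hx : 0 < x)
  set y := gFun C x with hy_def
  have hy : 0 < y := gFun_pos hC (by linarith)
  have hrel := (gFun_eq_iff hC (by linarith) hy).1 hy_def.symm
  have hQ : 0 < (2 * C + 1) * y - 2 * C := by
    by_contra! hQ
    have : (1 - y) * (y + 2 * C) ≤ 0 := hrel ▸ mul_nonpos_of_nonneg_of_nonpos hx.le hQ
    nlinarith
  exact ⟨(two_mul_div_lt_iff hC).2 hQ, by nlinarith [mul_pos hx hQ]⟩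

lemma gInv_mapsTo : MapsTo (gInv C) (Ioo (2 * C / (2 * C + 1)) 1) (Ioi 0) := by
  rintro y ⟨hlo, hhi⟩
  have hQ := (two_mul_div_lt_iff hC).1 hlo
  exact div_pos (mul_pos (by linarith) (by nlinarith)) hQ

lemma gInv_gFun {x : ℝ} (hx : 0 < x) : gInv C (gFun C x) = x := by
  obtain ⟨hlo, -⟩ := gFun_mapsTo hC hx
  have hQ := (two_mul_div_lt_iff hC).1 hlo
  have hrel := (gFun_eq_iff (x := x) hC (by linarith) (gFun_pos hC (by linarith))).1 rfl
  exact ((eq_div_iff hQ.ne').2 hrel).symm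

lemma gFun_gInv {y : ℝ} (hy : y ∈ Ioo (2 * C / (2 * C + 1)) 1) : gFun C (gInv C y) = y := by
  have hQ := (two_mul_div_lt_iff hC).1 hy.1
  have hx : 0 < gInv C y := gInv_mapsTo hC hy
  exact (gFun_eq_iff hC (by linarith) (by nlinarith)).2 (div_mul_cancel₀ _ hQ.ne')

end Bijection

lemma neg_add_sqrt_div_two_eq_one {C : ℝ} (hC : -1 / 2 ≤ C) :
    (-(2 * C - 1) + Real.sqrt ((2 * C - 1) ^ 2 + 8 * C)) / 2 = 1 := by
  have h : (2 * C - 1) ^ 2 + 8 * C = (2 * C + 1) ^ 2 := by ring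
  rw [h, Real.sqrt_sq (by linarith)]; ring

/-- g maps (0,∞) bijectively onto (2C/(2C+1), L), where
L = (−(2C−1) + √((2C−1)² + 8C))/2. -/
theorem stmt_4 (C : ℝ) (hC : 0 < C) :
    BijOn (gFun C) (Ioi (0 : ℝ))
      (Ioo (2 * C / (2 * C + 1))
        ((-(2 * C - 1) + Real.sqrt ((2 * C - 1) ^ 2 + 8 * C)) / 2)) := by
  rw [neg_add_sqrt_div_two_eq_one (by linarith)]
  exact InvOn.bijOn ⟨fun _ hx => gInv_gFun hC hx, fun _ hy => gFun_gInv hC hy⟩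
    (gFun_mapsTo hC) (gInv_mapsTo hC)
end

section
/- Let A > 0, C₂ > 0, β > 0, ξ₁ > 0, ξ₂ > 0, and set d = ξ₂/A + ξ₂/(2ξ₁). Then the first-order condition (1 + C₂ + A·C₂/(2ξ₁))·∫_d^∞ (y − d)·β·e^{−βy} dy − d·e^{−βd} = 0 holds if and only if ξ₂ = h₂(ξ₁) := (A/β)·( 1 + C₂ − A/(A + 2ξ₁) ). -/
open MeasureTheory

lemma stoploss (β d : ℝ) (hβ : 0 < β) :
    (∫ y in Set.Ioi d, (y - d) * (β * Real.exp (-β * y))) = Real.exp (-β * d) / β := by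
  have h := MeasureTheory.integral_Ioi_of_hasDerivAt_of_nonneg'
    (g := fun y => -(y - d) * Real.exp (-β * y) - Real.exp (-β * y) / β)
    (g' := fun y => (y - d) * (β * Real.exp (-β * y))) (a := d) (l := 0) ?_ ?_ ?_
  · rw [h]
    simp
  · intro x hx
    have h1 : HasDerivAt (fun y : ℝ => Real.exp (-β * y)) (-β * Real.exp (-β * x)) x := by
      have h0 : HasDerivAt (fun y : ℝ => -β * y) (-β) x := by
        simpa using (hasDerivAt_id x).const_mul (-β)
      simpa [mul_comm] using h0.exp
    have h2 : HasDerivAt (fun y : ℝ => -(y - d) * Real.exp (-β * y) - Real.exp (-β * y) / β)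
        ((-1) * Real.exp (-β * x) + (-(x - d)) * (-β * Real.exp (-β * x)) - (-β * Real.exp (-β * x)) / β) x := by
      exact (((((hasDerivAt_id x).sub_const d).neg).mul h1)).sub (h1.div_const β)
    convert h2 using 1
    field_simp
    ring
  · intro x hx
    have : 0 ≤ x - d := by
      simp [Set.mem_Ioi] at hx; linarith
    positivity
  · have h1 : Filter.Tendsto (fun y : ℝ => -(y - d) * Real.exp (-β * y)) Filter.atTop (nhds 0) := by
      have := tendsto_rpow_mul_exp_neg_mul_atTop_nhds_zero 1 β hβ
      simp only [Real.rpow_one] at this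
      have h2 : Filter.Tendsto (fun y : ℝ => d * Real.exp (-β * y)) Filter.atTop (nhds 0) := by
        have := Real.tendsto_exp_neg_atTop_nhds_zero.comp (Filter.tendsto_id.const_mul_atTop hβ)
        simpa [Function.comp, mul_comm, neg_mul] using (this.const_mul d)
      have := h2.sub this
      simpa [neg_mul, sub_mul, neg_sub, mul_comm] using this
    have h2 : Filter.Tendsto (fun y : ℝ => Real.exp (-β * y) / β) Filter.atTop (nhds 0) := by
      have := Real.tendsto_exp_neg_atTop_nhds_zero.comp (Filter.tendsto_id.const_mul_atTop hβ)
      simpa [Function.comp, neg_mul] using this.div_const β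
    simpa using h1.sub h2

/-- With d = ξ₂/A + ξ₂/(2ξ₁), the first-order condition
(1 + C₂ + A·C₂/(2ξ₁))·∫_d^∞ (y−d)·β·e^{−βy} dy − d·e^{−βd} = 0 holds iff
ξ₂ = (A/β)·(1 + C₂ − A/(A + 2ξ₁)). -/
theorem stmt_9 (A C₂ β ξ₁ ξ₂ : ℝ) (hA : 0 < A) (hC₂ : 0 < C₂) (hβ : 0 < β)
    (hξ₁ : 0 < ξ₁) (hξ₂ : 0 < ξ₂) :
    ((1 + C₂ + A * C₂ / (2 * ξ₁)) *
        (∫ y in Set.Ioi (ξ₂ / A + ξ₂ / (2 * ξ₁)),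
          (y - (ξ₂ / A + ξ₂ / (2 * ξ₁))) * (β * Real.exp (-β * y))) -
      (ξ₂ / A + ξ₂ / (2 * ξ₁)) * Real.exp (-β * (ξ₂ / A + ξ₂ / (2 * ξ₁))) = 0)
      ↔ ξ₂ = (A / β) * (1 + C₂ - A / (A + 2 * ξ₁)) := by
  set d := ξ₂ / A + ξ₂ / (2 * ξ₁) with hd
  rw [stoploss β d hβ]
  have hE : 0 < Real.exp (-β * d) := Real.exp_pos _
  have hK : (1 + C₂ + A * C₂ / (2 * ξ₁)) * (Real.exp (-β * d) / β) - d * Real.exp (-β * d)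
      = Real.exp (-β * d) * ((1 + C₂ + A * C₂ / (2 * ξ₁)) / β - d) := by ring
  rw [hK, mul_eq_zero, or_iff_right (ne_of_gt hE), sub_eq_zero]
  have h2 : (0:ℝ) < A + 2 * ξ₁ := by linarith
  constructor
  · intro h
    rw [hd] at h
    field_simp at h ⊢
    nlinarith [h]
  · intro h
    rw [hd, h]
    field_simp
    ring
end

section
/- (Proposition 3.2, small-claim case.) Let ξ₁ > 0, ξ₂ > 0, a > 0, y > 0, and set q = a/(2ξ₁ + a) and d = ξ₂/a + ξ₂/(2ξ₁). If y ≤ d, then the function F(l₁, l₂) := −ξ₁·l₁² − ξ₂·l₂ − (a/2)·(y − l₁ − l₂)² attains its maximum over the set K = { (l₁, l₂) : l₁ ≥ 0, l₂ ≥ 0, l₁ + l₂ ≤ y } uniquely at the point (l₁, l₂) = (q·y, 0). -/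
/-- **Proposition 3.2, small-claim case.** If y ≤ d, the insurer's
pointwise objective attains its maximum over the admissible set uniquely at
(l₁, l₂) = (q·y, 0), where q = a/(2ξ₁ + a) and d = ξ₂/a + ξ₂/(2ξ₁). -/
theorem stmt_18 (ξ₁ ξ₂ a y : ℝ) (hξ₁ : 0 < ξ₁) (hξ₂ : 0 < ξ₂) (ha : 0 < a)
    (hy : 0 < y) (hyd : y ≤ ξ₂ / a + ξ₂ / (2 * ξ₁)) :
    (a / (2 * ξ₁ + a) * y, (0 : ℝ)) ∈
      {p : ℝ × ℝ | 0 ≤ p.1 ∧ 0 ≤ p.2 ∧ p.1 + p.2 ≤ y} ∧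
    ∀ p ∈ {p : ℝ × ℝ | 0 ≤ p.1 ∧ 0 ≤ p.2 ∧ p.1 + p.2 ≤ y},
      p ≠ (a / (2 * ξ₁ + a) * y, (0 : ℝ)) →
      -ξ₁ * p.1 ^ 2 - ξ₂ * p.2 - (a / 2) * (y - p.1 - p.2) ^ 2 <
        -ξ₁ * (a / (2 * ξ₁ + a) * y) ^ 2 - ξ₂ * 0 -
          (a / 2) * (y - a / (2 * ξ₁ + a) * y - 0) ^ 2 := by
  have hs : (0:ℝ) < 2 * ξ₁ + a := by linarith
  have h1 : 2 * a * ξ₁ * y ≤ 2 * ξ₁ * ξ₂ + a * ξ₂ := by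
    rw [div_add_div _ _ ha.ne' (by positivity : (2*ξ₁) ≠ 0),
      le_div_iff₀ (by positivity)] at hyd
    nlinarith [hyd]
  set t : ℝ := a / (2 * ξ₁ + a) * y with ht
  have hc : 0 ≤ ξ₂ - 2 * a * ξ₁ * y / (2 * ξ₁ + a) := by
    rw [sub_nonneg, div_le_iff₀ hs]; nlinarith
  constructor
  · refine ⟨by positivity, le_refl _, ?_⟩
    simp only [add_zero]
    rw [ht, div_mul_eq_mul_div, div_le_iff₀ hs]
    nlinarith
  · intro p hp hne
    obtain ⟨h1p, h2p, h3p⟩ := hp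
    have key : (-ξ₁ * t ^ 2 - ξ₂ * 0 - a / 2 * (y - t - 0) ^ 2) -
        (-ξ₁ * p.1 ^ 2 - ξ₂ * p.2 - a / 2 * (y - p.1 - p.2) ^ 2) =
        ξ₁ * (p.1 - t) ^ 2 + a / 2 * (p.1 + p.2 - t) ^ 2 +
          (ξ₂ - 2 * a * ξ₁ * y / (2 * ξ₁ + a)) * p.2 := by
      rw [ht]; field_simp; ring
    rcases eq_or_lt_of_le h2p with hp2 | hp2
    · have hp1 : p.1 ≠ t := by
        intro h; exact hne (Prod.ext h hp2.symm)
      have h0 : 0 < (p.1 - t) ^ 2 := by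
        have := sub_ne_zero.mpr hp1; positivity
      nlinarith [sq_nonneg (p.1 + p.2 - t), mul_nonneg hc hp2.le]
    · rcases eq_or_ne p.1 t with hp1 | hp1
      · have : 0 < (p.1 + p.2 - t) ^ 2 := by
          have : p.1 + p.2 - t = p.2 := by rw [hp1]; ring
          rw [this]; positivity
        nlinarith [sq_nonneg (p.1 - t), mul_nonneg hc hp2.le]
      · have : 0 < (p.1 - t) ^ 2 := by
          have := sub_ne_zero.mpr hp1; positivity
        nlinarith [sq_nonneg (p.1 + p.2 - t), mul_nonneg hc hp2.le]
end

section
/- (Proposition 3.2, large-claim case.) Let ξ₁ > 0, ξ₂ > 0, a > 0, y > 0, and set d = ξ₂/a + ξ₂/(2ξ₁). If y > d, then the function F(l₁, l₂) := −ξ₁·l₁² − ξ₂·l₂ − (a/2)·(y − l₁ − l₂)² attains its maximum over the set K = { (l₁, l₂) : l₁ ≥ 0, l₂ ≥ 0, l₁ + l₂ ≤ y } uniquely at the point (l₁, l₂) = ( ξ₂/(2ξ₁), y − d ). -/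
/-!
Completing the square in `l₁` and in the retained amount `y - l₁ - l₂` gives, for `l* = optimalCession`,
`F l = F l* - ξ₁ (l₁ - l₁*)² - (a/2) (l₁ + l₂ - l₁* - l₂*)²`, so `l*` is the unique maximiser
of `F` on all of `ℝ²`; the condition `d < y` only serves to place `l*` in `K`.
-/

noncomputable section

namespace Reinsurance

variable {ξ₁ ξ₂ a y : ℝ}

def objective (ξ₁ ξ₂ a y : ℝ) (l : ℝ × ℝ) : ℝ :=
  -ξ₁ * l.1 ^ 2 - ξ₂ * l.2 - (a / 2) * (y - l.1 - l.2) ^ 2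

def admissible (y : ℝ) : Set (ℝ × ℝ) :=
  {l | 0 ≤ l.1 ∧ 0 ≤ l.2 ∧ l.1 + l.2 ≤ y}

def optimalCession (ξ₁ ξ₂ a y : ℝ) : ℝ × ℝ :=
  (ξ₂ / (2 * ξ₁), y - (ξ₂ / a + ξ₂ / (2 * ξ₁)))

theorem objective_eq_sub_sq (hξ₁ : ξ₁ ≠ 0) (ha : a ≠ 0) (l : ℝ × ℝ) :
    objective ξ₁ ξ₂ a y l =
      objective ξ₁ ξ₂ a y (optimalCession ξ₁ ξ₂ a y)
        - ξ₁ * (l.1 - (optimalCession ξ₁ ξ₂ a y).1) ^ 2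
        - a / 2 * (l.1 + l.2 - ((optimalCession ξ₁ ξ₂ a y).1 + (optimalCession ξ₁ ξ₂ a y).2)) ^ 2 := by
  simp only [objective, optimalCession]
  field_simp
  ring

theorem objective_lt_optimalCession (hξ₁ : 0 < ξ₁) (ha : 0 < a) {l : ℝ × ℝ}
    (hl : l ≠ optimalCession ξ₁ ξ₂ a y) :
    objective ξ₁ ξ₂ a y l < objective ξ₁ ξ₂ a y (optimalCession ξ₁ ξ₂ a y) := by
  set l' := optimalCession ξ₁ ξ₂ a y
  rw [objective_eq_sub_sq hξ₁.ne' ha.ne' l]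
  suffices 0 < ξ₁ * (l.1 - l'.1) ^ 2 + a / 2 * (l.1 + l.2 - (l'.1 + l'.2)) ^ 2 by linarith
  by_cases h₁ : l.1 = l'.1
  · have h₂ : l.1 + l.2 - (l'.1 + l'.2) ≠ 0 := fun h => hl (Prod.ext h₁ (by linarith))
    exact add_pos_of_nonneg_of_pos (by positivity) (mul_pos (half_pos ha) (sq_pos_of_ne_zero h₂))
  · exact add_pos_of_pos_of_nonneg (mul_pos hξ₁ (sq_pos_of_ne_zero (sub_ne_zero.2 h₁)))
      (by positivity)

theorem optimalCession_mem_admissible (hξ₁ : 0 ≤ ξ₁) (hξ₂ : 0 ≤ ξ₂) (ha : 0 ≤ a)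
    (hy : ξ₂ / a + ξ₂ / (2 * ξ₁) ≤ y) :
    optimalCession ξ₁ ξ₂ a y ∈ admissible y := by
  have h₁ : 0 ≤ ξ₂ / (2 * ξ₁) := by positivity
  have h₂ : 0 ≤ ξ₂ / a := by positivity
  exact ⟨h₁, by dsimp only [optimalCession]; linarith, by dsimp only [optimalCession]; linarith⟩

end Reinsurance

end

theorem stmt_19_general (ξ₁ ξ₂ a y : ℝ) (hξ₁ : 0 < ξ₁) (hξ₂ : 0 < ξ₂) (ha : 0 < a)
    (hyd : ξ₂ / a + ξ₂ / (2 * ξ₁) < y) :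
    (ξ₂ / (2 * ξ₁), y - (ξ₂ / a + ξ₂ / (2 * ξ₁))) ∈
      {p : ℝ × ℝ | 0 ≤ p.1 ∧ 0 ≤ p.2 ∧ p.1 + p.2 ≤ y} ∧
    ∀ p ∈ {p : ℝ × ℝ | 0 ≤ p.1 ∧ 0 ≤ p.2 ∧ p.1 + p.2 ≤ y},
      p ≠ (ξ₂ / (2 * ξ₁), y - (ξ₂ / a + ξ₂ / (2 * ξ₁))) →
      -ξ₁ * p.1 ^ 2 - ξ₂ * p.2 - (a / 2) * (y - p.1 - p.2) ^ 2 <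
        -ξ₁ * (ξ₂ / (2 * ξ₁)) ^ 2 - ξ₂ * (y - (ξ₂ / a + ξ₂ / (2 * ξ₁))) -
          (a / 2) * (y - ξ₂ / (2 * ξ₁) - (y - (ξ₂ / a + ξ₂ / (2 * ξ₁)))) ^ 2 :=
  ⟨Reinsurance.optimalCession_mem_admissible hξ₁.le hξ₂.le ha.le hyd.le,
    fun _ _ hp => Reinsurance.objective_lt_optimalCession hξ₁ ha hp⟩

/-- **Proposition 3.2, large-claim case.** If y > d, the insurer's
pointwise objective attains its maximum over the admissible set uniquely at
(l₁, l₂) = (ξ₂/(2ξ₁), y − d), where d = ξ₂/a + ξ₂/(2ξ₁). -/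
theorem stmt_19 (ξ₁ ξ₂ a y : ℝ) (hξ₁ : 0 < ξ₁) (hξ₂ : 0 < ξ₂) (ha : 0 < a)
    (hy : 0 < y) (hyd : ξ₂ / a + ξ₂ / (2 * ξ₁) < y) :
    (ξ₂ / (2 * ξ₁), y - (ξ₂ / a + ξ₂ / (2 * ξ₁))) ∈
      {p : ℝ × ℝ | 0 ≤ p.1 ∧ 0 ≤ p.2 ∧ p.1 + p.2 ≤ y} ∧
    ∀ p ∈ {p : ℝ × ℝ | 0 ≤ p.1 ∧ 0 ≤ p.2 ∧ p.1 + p.2 ≤ y},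
      p ≠ (ξ₂ / (2 * ξ₁), y - (ξ₂ / a + ξ₂ / (2 * ξ₁))) →
      -ξ₁ * p.1 ^ 2 - ξ₂ * p.2 - (a / 2) * (y - p.1 - p.2) ^ 2 <
        -ξ₁ * (ξ₂ / (2 * ξ₁)) ^ 2 - ξ₂ * (y - (ξ₂ / a + ξ₂ / (2 * ξ₁))) -
          (a / 2) * (y - ξ₂ / (2 * ξ₁) - (y - (ξ₂ / a + ξ₂ / (2 * ξ₁)))) ^ 2 :=
  stmt_19_general ξ₁ ξ₂ a y hξ₁ hξ₂ ha hyd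
end
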